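/- The one-sided Mahavier dynamical system (I_{F_{1/2,3}}^+, σ^+_{F_{1/2,3}}) does not have the shadowing property. -/

import Mathlib

open Set Filter Topology

/-- One-sided Mahavier product of a relation `F` on `X`. -/
def MahavierPlus {X : Type*} (F : Set (X × X)) : Set (ℕ → X) :=
  {x | ∀ n : ℕ, (x n, x (n + 1)) ∈ F}

/-- Two-sided Mahavier product of a relation `F` on `X`. -/
def MahavierTwo {X : Type*} (F : Set (X × X)) : Set (ℤ → X) :=
  {x | ∀ n : ℤ, (x n, x (n + 1)) ∈ F}

/-- The shift map on the one-sided Mahavier product. -/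
def shiftPlus {X : Type*} (F : Set (X × X)) (x : MahavierPlus F) : MahavierPlus F :=
  ⟨fun n => (x : ℕ → X) (n + 1), fun n => x.2 (n + 1)⟩

/-- The shift map on the two-sided Mahavier product. -/
def shiftTwo {X : Type*} (F : Set (X × X)) (x : MahavierTwo F) : MahavierTwo F :=
  ⟨fun n => (x : ℤ → X) (n + 1), fun n => x.2 (n + 1)⟩

/-- The metric `D(x,y) = sup_{n ≥ 1} d(x_n, y_n)/2^n` on one-sided sequences
(coordinates are indexed from `0` here, so the weight is `2^(n+1)`). -/
noncomputable def DPlus {X : Type*} [PseudoMetricSpace X] (x y : ℕ → X) : ℝ :=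
  ⨆ n : ℕ, dist (x n) (y n) / 2 ^ (n + 1)

/-- The metric `D(x,y) = sup_{n ∈ ℤ} d(x_n, y_n)/2^{|n|}` on two-sided sequences. -/
noncomputable def DTwo {X : Type*} [PseudoMetricSpace X] (x y : ℤ → X) : ℝ :=
  ⨆ n : ℤ, dist (x n) (y n) / 2 ^ n.natAbs

/-- Topological transitivity. -/
def TopTransitive {Y : Type*} [TopologicalSpace Y] (f : Y → Y) : Prop :=
  ∀ U V : Set Y, IsOpen U → IsOpen V → U.Nonempty → V.Nonempty →
    ∃ n : ℕ, (f^[n] '' U ∩ V).Nonempty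

/-- Topological mixing. -/
def TopMixing {Y : Type*} [TopologicalSpace Y] (f : Y → Y) : Prop :=
  ∀ U V : Set Y, IsOpen U → IsOpen V → U.Nonempty → V.Nonempty →
    ∃ n₀ : ℕ, ∀ n : ℕ, n₀ ≤ n → (f^[n] '' U ∩ V).Nonempty

/-- The shadowing property for a map `f` with respect to a distance `dY`. -/
def ShadowingProp {Y : Type*} (dY : Y → Y → ℝ) (f : Y → Y) : Prop :=
  ∀ ε : ℝ, 0 < ε → ∃ δ : ℝ, 0 < δ ∧ ∀ x : ℕ → Y,
    (∀ k : ℕ, dY (f (x k)) (x (k + 1)) < δ) →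
    ∃ y : Y, ∀ k : ℕ, dY (f^[k] y) (x k) < ε

/-- The specification property for a map `f` with respect to a distance `dY`. -/
def SpecProp {Y : Type*} (dY : Y → Y → ℝ) (f : Y → Y) : Prop :=
  ∀ ε : ℝ, 0 < ε → ∃ N : ℕ, 0 < N ∧ ∀ n : ℕ, 0 < n →
    ∀ x : Fin n → Y, ∀ k l : Fin n → ℕ,
      (∀ i, k i ≤ l i) →
      (∀ i j : Fin n, (i : ℕ) + 1 = (j : ℕ) → l i + N ≤ k j) →
      ∃ y : Y, ∀ i : Fin n, ∀ m : ℕ, k i ≤ m → m ≤ l i →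
        dY (f^[m] y) (f^[m] (x i)) ≤ ε

/-- The CR-specification property for the one-sided Mahavier product of `F`. -/
def CRSpec {X : Type*} [PseudoMetricSpace X] (F : Set (X × X)) : Prop :=
  ∀ ε : ℝ, 0 < ε → ∃ N : ℕ, 0 < N ∧ ∀ n : ℕ, 0 < n →
    ∀ x : Fin n → MahavierPlus F, ∀ k l : Fin n → ℕ,
      (∀ i, k i ≤ l i) →
      (∀ i j : Fin n, (i : ℕ) + 1 = (j : ℕ) → l i + N ≤ k j) →
      ∃ y : MahavierPlus F, ∀ i : Fin n, ∀ m : ℕ, k i ≤ m → m ≤ l i →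
        dist ((x i : ℕ → X) m) ((y : ℕ → X) m) ≤ ε

/-- The image of a set under a relation. -/
def relImage {X : Type*} (F : Set (X × X)) (A : Set X) : Set X :=
  {y | ∃ a ∈ A, (a, y) ∈ F}

/-- Composition of relations. -/
def relComp {X : Type*} (F G : Set (X × X)) : Set (X × X) :=
  {p | ∃ z : X, (p.1, z) ∈ F ∧ (z, p.2) ∈ G}

/-- Iterated composition `F^n` of a relation with itself. -/
def relPow {X : Type*} (F : Set (X × X)) : ℕ → Set (X × X)
  | 0 => {p | p.1 = p.2}
  | n + 1 => relComp (relPow F n) F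

/-- The relation `F_{1/2,3} = {(x,3x) : 0 ≤ x ≤ 1/3} ∪ {(x,x/2) : 0 ≤ x ≤ 1}` on `I = [0,1]`. -/
def F23 : Set (ℝ × ℝ) :=
  {p | (p.1 ∈ Set.Icc (0 : ℝ) (1 / 3) ∧ p.2 = 3 * p.1) ∨
       (p.1 ∈ Set.Icc (0 : ℝ) 1 ∧ p.2 = p.1 / 2)}

/-!
A true orbit `y` of `F_{1/2,3}` satisfies `y m = y 0 * 3 ^ a / 2 ^ (m - a)`, i.e.
`y m * 2 ^ m = y 0 * 6 ^ a`. The pseudo-orbit that halves `1` for `p` steps and then jumps to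
`3 ^ (-q)` and triples back up to `1` has arbitrarily small jumps, so a shadowing orbit would
start near `1` and be near `1` again at time `m = p + 1 + q`; hence `2 ^ m` would lie within a
factor `8/7` of a power of `6` for every large `m`. This fails for `m` or `m + 1`, since
consecutive powers of `2` differ by a factor `2` and consecutive powers of `6` by `6`.
-/

open Function

section PseudoOrbit

variable {Y : Type*}

def IsPseudoOrbit (dY : Y → Y → ℝ) (f : Y → Y) (δ : ℝ) (x : ℕ → Y) : Prop :=
  ∀ k, dY (f (x k)) (x (k + 1)) < δ

def orbitConcat (f : Y → Y) (u v : Y) (p k : ℕ) : Y :=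
  if k ≤ p then f^[k] u else f^[k - (p + 1)] v

lemma orbitConcat_of_le (f : Y → Y) (u v : Y) {p k : ℕ} (h : k ≤ p) :
    orbitConcat f u v p k = f^[k] u :=
  if_pos h

lemma orbitConcat_add (f : Y → Y) (u v : Y) (p j : ℕ) :
    orbitConcat f u v p (p + 1 + j) = f^[j] v := by
  rw [orbitConcat, if_neg (by omega), Nat.add_sub_cancel_left]

lemma isPseudoOrbit_orbitConcat {dY : Y → Y → ℝ} {δ : ℝ} {f : Y → Y} {u v : Y} {p : ℕ}
    (h : dY (f^[p + 1] u) v < δ) (hd : ∀ z, dY z z = 0) (hδ : 0 < δ) :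
    IsPseudoOrbit dY f δ (orbitConcat f u v p) := by
  intro k
  rcases lt_trichotomy k p with hk | rfl | hk
  · rw [orbitConcat_of_le f u v hk.le, orbitConcat_of_le f u v hk, ← iterate_succ_apply' f, hd]
    exact hδ
  · rw [orbitConcat_of_le f u v le_rfl, ← iterate_succ_apply' f, ← add_zero (k + 1),
      orbitConcat_add]
    exact h
  · obtain ⟨j, rfl⟩ : ∃ j, k = p + 1 + j := ⟨k - (p + 1), by omega⟩
    rw [orbitConcat_add, add_assoc (p + 1) j 1, orbitConcat_add, ← iterate_succ_apply' f, hd]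
    exact hδ

end PseudoOrbit

section MahavierProduct

variable {X : Type*}

lemma shiftPlus_iterate_apply (F : Set (X × X)) (y : MahavierPlus F) (k n : ℕ) :
    ((shiftPlus F)^[k] y : ℕ → X) n = (y : ℕ → X) (n + k) := by
  induction k generalizing n with
  | zero => rfl
  | succ k ih =>
    rw [iterate_succ_apply']
    exact (ih (n + 1)).trans (by rw [add_right_comm, add_assoc])

variable [PseudoMetricSpace X]

lemma DPlus_self (x : ℕ → X) : DPlus x x = 0 := by
  simp [DPlus]

lemma dist_le_two_mul_DPlus {x y : ℕ → X} {C : ℝ} (h : ∀ n, dist (x n) (y n) ≤ C) :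
    dist (x 0) (y 0) ≤ 2 * DPlus x y := by
  have hbdd : BddAbove (range fun n => dist (x n) (y n) / 2 ^ (n + 1)) :=
    ⟨C, by
      rintro _ ⟨n, rfl⟩
      exact (div_le_self dist_nonneg (one_le_pow₀ one_le_two)).trans (h n)⟩
  have := le_ciSup hbdd 0
  rw [zero_add, pow_one] at this
  unfold DPlus
  linarith

end MahavierProduct

section RelationF23

lemma mem_Icc_of_mem_MahavierPlus {y : ℕ → ℝ} (hy : y ∈ MahavierPlus F23) (n : ℕ) :
    y n ∈ Icc (0 : ℝ) 1 := by
  rcases hy n with ⟨⟨h0, h1⟩, _⟩ | ⟨h, _⟩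
  · exact ⟨h0, by linarith⟩
  · exact h

lemma exists_mul_two_pow_eq_mul_six_pow {y : ℕ → ℝ} (hy : y ∈ MahavierPlus F23) (m : ℕ) :
    ∃ a : ℕ, y m * 2 ^ m = y 0 * 6 ^ a := by
  induction m with
  | zero => exact ⟨0, by simp⟩
  | succ m ih =>
    obtain ⟨a, ha⟩ := ih
    rcases hy m with ⟨_, h⟩ | ⟨_, h⟩ <;> simp only at h <;> rw [h, pow_succ]
    · exact ⟨a + 1, by rw [pow_succ]; linear_combination 6 * ha⟩
    · exact ⟨a, by linear_combination ha⟩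

def TwoPowNearSixPow (m : ℕ) : Prop :=
  ∃ a : ℕ, (7 : ℝ) * 2 ^ m < 8 * 6 ^ a ∧ (7 : ℝ) * 6 ^ a < 8 * 2 ^ m

lemma twoPowNearSixPow_of_mem_MahavierPlus {y : ℕ → ℝ} (hy : y ∈ MahavierPlus F23) {m : ℕ}
    (h0 : 7 / 8 < y 0) (hm : 7 / 8 < y m) : TwoPowNearSixPow m := by
  obtain ⟨a, ha⟩ := exists_mul_two_pow_eq_mul_six_pow hy m
  have h0' := (mem_Icc_of_mem_MahavierPlus hy 0).2
  have hm' := (mem_Icc_of_mem_MahavierPlus hy m).2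
  have h2 : (0 : ℝ) < 2 ^ m := by positivity
  have h6 : (0 : ℝ) < 6 ^ a := by positivity
  exact ⟨a, by nlinarith, by nlinarith⟩

lemma not_twoPowNearSixPow_and_succ (m : ℕ) :
    ¬ (TwoPowNearSixPow m ∧ TwoPowNearSixPow (m + 1)) := by
  rintro ⟨⟨a, ha₁, ha₂⟩, ⟨b, hb₁, hb₂⟩⟩
  rw [pow_succ] at hb₁ hb₂
  have hab : (6 : ℝ) ^ a < 6 ^ b := by nlinarith
  have hba : (6 : ℝ) ^ b < 6 ^ (a + 1) := by rw [pow_succ]; nlinarith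
  rw [pow_lt_pow_iff_right₀ (by norm_num)] at hab hba
  omega

noncomputable def halvingOrbit : MahavierPlus F23 :=
  ⟨fun n => 2⁻¹ ^ n, fun n =>
    Or.inr ⟨⟨by positivity, pow_le_one₀ (by norm_num) (by norm_num)⟩,
      by simp [pow_succ, div_eq_mul_inv]⟩⟩

noncomputable def climbSeq (q n : ℕ) : ℝ :=
  if n ≤ q then 3⁻¹ ^ (q - n) else 2⁻¹ ^ (n - q)

lemma climbSeq_mem (q : ℕ) : climbSeq q ∈ MahavierPlus F23 := by
  intro n
  rcases lt_trichotomy n q with h | rfl | h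
  · refine Or.inl ⟨⟨by simp [climbSeq, h.le], ?_⟩, ?_⟩ <;>
      simp only [climbSeq, if_pos h.le, if_pos (Nat.succ_le_of_lt h)] <;>
      rw [show q - n = q - (n + 1) + 1 by omega, pow_succ]
    · have : (3⁻¹ : ℝ) ^ (q - (n + 1)) ≤ 1 := pow_le_one₀ (by norm_num) (by norm_num)
      linarith
    · ring
  · exact Or.inr ⟨by simp [climbSeq], by simp [climbSeq]⟩
  · refine Or.inr ⟨⟨by simp [climbSeq, h.not_ge], ?_⟩, ?_⟩ <;>
      simp only [climbSeq, if_neg h.not_ge, if_neg (by omega : ¬ n + 1 ≤ q)]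
    · exact pow_le_one₀ (by norm_num) (by norm_num)
    · rw [show n + 1 - q = n - q + 1 by omega, pow_succ, div_eq_mul_inv]

noncomputable def climbOrbit (q : ℕ) : MahavierPlus F23 :=
  ⟨climbSeq q, climbSeq_mem q⟩

lemma climbSeq_div_le (q n : ℕ) : climbSeq q n / 2 ^ (n + 1) ≤ 2⁻¹ ^ (q + 1) := by
  rw [div_eq_mul_inv, ← inv_pow]
  unfold climbSeq
  split_ifs with h
  · calc (3⁻¹ : ℝ) ^ (q - n) * 2⁻¹ ^ (n + 1) ≤ 2⁻¹ ^ (q - n) * 2⁻¹ ^ (n + 1) := by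
          gcongr; norm_num
      _ = 2⁻¹ ^ (q + 1) := by rw [← pow_add]; congr 1; omega
  · calc (2⁻¹ : ℝ) ^ (n - q) * 2⁻¹ ^ (n + 1) ≤ 1 * 2⁻¹ ^ (n + 1) := by
          gcongr; exact pow_le_one₀ (by norm_num) (by norm_num)
      _ ≤ 2⁻¹ ^ (q + 1) := by
          rw [one_mul]; exact pow_le_pow_of_le_one (by norm_num) (by norm_num) (by omega)

lemma DPlus_halvingOrbit_climbOrbit_le (p q : ℕ) :
    DPlus ((shiftPlus F23)^[p + 1] halvingOrbit : ℕ → ℝ) (climbOrbit q : ℕ → ℝ) ≤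
      2⁻¹ ^ (p + 1) + 2⁻¹ ^ (q + 1) := by
  refine Real.iSup_le (fun n => ?_) (by positivity)
  rw [shiftPlus_iterate_apply]
  have hclimb := (mem_Icc_of_mem_MahavierPlus (climbSeq_mem q) n).1
  have hhalf : (2⁻¹ : ℝ) ^ (n + (p + 1)) / 2 ^ (n + 1) ≤ 2⁻¹ ^ (p + 1) :=
    (div_le_self (by positivity) (one_le_pow₀ one_le_two)).trans
      (pow_le_pow_of_le_one (by norm_num) (by norm_num) (by omega))
  calc dist ((2⁻¹ : ℝ) ^ (n + (p + 1))) (climbSeq q n) / 2 ^ (n + 1)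
      ≤ (2⁻¹ ^ (n + (p + 1)) + climbSeq q n) / 2 ^ (n + 1) := by
        gcongr
        rw [Real.dist_eq, abs_le]
        constructor <;> linarith [pow_nonneg (by norm_num : (0 : ℝ) ≤ 2⁻¹) (n + (p + 1))]
    _ ≤ 2⁻¹ ^ (p + 1) + 2⁻¹ ^ (q + 1) := by
        rw [add_div]; exact add_le_add hhalf (climbSeq_div_le q n)

lemma isPseudoOrbit_halvingOrbit_climbOrbit {δ : ℝ} (hδ : 0 < δ) {p q : ℕ}
    (hp : (2⁻¹ : ℝ) ^ p < δ) (hq : (2⁻¹ : ℝ) ^ q ≤ 2⁻¹ ^ p) :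
    IsPseudoOrbit (fun a b : MahavierPlus F23 => DPlus (a : ℕ → ℝ) (b : ℕ → ℝ)) (shiftPlus F23) δ
      (orbitConcat (shiftPlus F23) halvingOrbit (climbOrbit q) p) := by
  refine isPseudoOrbit_orbitConcat ((DPlus_halvingOrbit_climbOrbit_le p q).trans_lt ?_)
    (fun _ => DPlus_self _) hδ
  rw [pow_succ, pow_succ]
  linarith

lemma seven_div_eight_lt_of_DPlus_lt {y z : ℕ → ℝ} (hy : y ∈ MahavierPlus F23)
    (hz : z ∈ MahavierPlus F23) (hz0 : z 0 = 1) (h : DPlus y z < 1 / 16) : 7 / 8 < y 0 := by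
  have := dist_le_two_mul_DPlus fun n => Real.dist_le_of_mem_Icc_01
    (mem_Icc_of_mem_MahavierPlus hy n) (mem_Icc_of_mem_MahavierPlus hz n)
  rw [hz0, Real.dist_eq, abs_sub_comm] at this
  linarith [le_abs_self (1 - y 0)]

lemma eventually_twoPowNearSixPow_of_shadowingProp
    (h : ShadowingProp (fun a b : MahavierPlus F23 => DPlus (a : ℕ → ℝ) (b : ℕ → ℝ))
      (shiftPlus F23)) :
    ∀ᶠ m in atTop, TwoPowNearSixPow m := by
  obtain ⟨δ, hδ, hsh⟩ := h (1 / 16) (by norm_num)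
  obtain ⟨P, hP⟩ := exists_pow_lt_of_lt_one hδ (by norm_num : (2⁻¹ : ℝ) < 1)
  refine eventually_atTop.2 ⟨P + 1 + P, fun m hm => ?_⟩
  obtain ⟨q, rfl⟩ : ∃ q, m = P + 1 + q := ⟨m - (P + 1), by omega⟩
  have hq : (2⁻¹ : ℝ) ^ q ≤ 2⁻¹ ^ P := pow_le_pow_of_le_one (by norm_num) (by norm_num) (by omega)
  obtain ⟨y, hy⟩ := hsh _ (isPseudoOrbit_halvingOrbit_climbOrbit hδ hP hq)
  refine twoPowNearSixPow_of_mem_MahavierPlus y.2 ?_ ?_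
  · have h0 := hy 0
    rw [orbitConcat_of_le _ _ _ (Nat.zero_le P)] at h0
    exact seven_div_eight_lt_of_DPlus_lt y.2 halvingOrbit.2 (pow_zero _) h0
  · have hm := hy (P + 1 + q)
    rw [orbitConcat_add] at hm
    have hq1 : ((shiftPlus F23)^[q] (climbOrbit q) : ℕ → ℝ) 0 = 1 := by
      rw [shiftPlus_iterate_apply]; simp [climbOrbit, climbSeq]
    have := seven_div_eight_lt_of_DPlus_lt ((shiftPlus F23)^[P + 1 + q] y).2
      ((shiftPlus F23)^[q] (climbOrbit q)).2 hq1 hm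
    rwa [shiftPlus_iterate_apply, zero_add] at this

end RelationF23

/-- The one-sided Mahavier system of `F_{1/2,3}` does not have the
shadowing property. -/
theorem stmt3 :
    ¬ ShadowingProp (fun a b : MahavierPlus F23 => DPlus (a : ℕ → ℝ) (b : ℕ → ℝ))
        (shiftPlus F23) := by
  intro h
  have hnear := eventually_twoPowNearSixPow_of_shadowingProp h
  obtain ⟨m, hm⟩ := (hnear.and ((tendsto_add_atTop_nat 1).eventually hnear)).exists
  exact not_twoPowNearSixPow_and_succ m hm
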